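/- Let m ≥ 2, 0 ≤ s ≤ m+1, let I ⊆ ℝ be an open interval, and let z : I → ℝ^{m+1} be a smooth curve. Define L(x,y) = z(x)/(x+y) − z'(x)/2 on U = {(x,y) : x ∈ I, x + y > 0}, and suppose U is nonempty and that on U: ⟨L, L⟩_s = 1, ⟨∂L/∂x, ∂L/∂x⟩_s = 0, ⟨∂L/∂y, ∂L/∂y⟩_s = 0, and ⟨∂L/∂x, ∂L/∂y⟩_s = −2/(x+y)². Then for all x ∈ I: ⟨z(x), z(x)⟩_s = 0, ⟨z'(x), z'(x)⟩_s = 4, and ⟨z''(x), z''(x)⟩_s = 0; that is, z is a spacelike curve of constant speed 2 lying in the light cone with lightlike acceleration. -/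

import Mathlib

noncomputable def pform (s n : ℕ) (u v : Fin n → ℝ) : ℝ :=
  ∑ i : Fin n, (if (i : ℕ) < s then -(u i * v i) else u i * v i)

noncomputable def pd1 {E : Type*} [NormedAddCommGroup E] [NormedSpace ℝ E]
    (L : ℝ → ℝ → E) (x y : ℝ) : E :=
  deriv (fun t => L t y) x

noncomputable def pd2 {E : Type*} [NormedAddCommGroup E] [NormedSpace ℝ E]
    (L : ℝ → ℝ → E) (x y : ℝ) : E :=
  deriv (fun t => L x t) y

lemma pform_comm (s n : ℕ) (u v : Fin n → ℝ) : pform s n u v = pform s n v u := by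
  unfold pform
  exact Finset.sum_congr rfl fun i _ => by split_ifs <;> ring

lemma pform_add_left (s n : ℕ) (u v w : Fin n → ℝ) :
    pform s n (u + v) w = pform s n u w + pform s n v w := by
  unfold pform
  rw [← Finset.sum_add_distrib]
  exact Finset.sum_congr rfl fun i _ => by
    simp only [Pi.add_apply]; split_ifs <;> ring

lemma pform_sub_left (s n : ℕ) (u v w : Fin n → ℝ) :
    pform s n (u - v) w = pform s n u w - pform s n v w := by
  unfold pform
  rw [← Finset.sum_sub_distrib]
  exact Finset.sum_congr rfl fun i _ => by
    simp only [Pi.sub_apply]; split_ifs <;> ring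

lemma pform_smul_left (s n : ℕ) (c : ℝ) (u v : Fin n → ℝ) :
    pform s n (c • u) v = c * pform s n u v := by
  unfold pform
  rw [Finset.mul_sum]
  exact Finset.sum_congr rfl fun i _ => by
    simp only [Pi.smul_apply, smul_eq_mul]; split_ifs <;> ring

lemma pform_add_right (s n : ℕ) (u v w : Fin n → ℝ) :
    pform s n u (v + w) = pform s n u v + pform s n u w := by
  rw [pform_comm, pform_add_left, pform_comm s n v u, pform_comm s n w u]

lemma pform_sub_right (s n : ℕ) (u v w : Fin n → ℝ) :
    pform s n u (v - w) = pform s n u v - pform s n u w := by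
  rw [pform_comm, pform_sub_left, pform_comm s n v u, pform_comm s n w u]

lemma pform_smul_right (s n : ℕ) (c : ℝ) (u v : Fin n → ℝ) :
    pform s n u (c • v) = c * pform s n u v := by
  rw [pform_comm, pform_smul_left, pform_comm s n v u]

theorem stmt_7 (m s : ℕ) (hm : 2 ≤ m) (hs : s ≤ m + 1) (I : Set ℝ)
    (hIo : IsOpen I) (hIc : I.OrdConnected)
    (z : ℝ → Fin (m + 1) → ℝ) (hz : ContDiffOn ℝ (⊤ : ℕ∞) z I)
    (L : ℝ → ℝ → Fin (m + 1) → ℝ)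
    (hLdef : ∀ x y : ℝ, L x y = (1 / (x + y)) • z x - (1 / 2 : ℝ) • deriv z x)
    (hne : ∃ x ∈ I, ∃ y : ℝ, 0 < x + y)
    (hLL : ∀ x ∈ I, ∀ y : ℝ, 0 < x + y → pform s (m + 1) (L x y) (L x y) = 1)
    (hxx : ∀ x ∈ I, ∀ y : ℝ, 0 < x + y → pform s (m + 1) (pd1 L x y) (pd1 L x y) = 0)
    (hyy : ∀ x ∈ I, ∀ y : ℝ, 0 < x + y → pform s (m + 1) (pd2 L x y) (pd2 L x y) = 0)
    (hxy : ∀ x ∈ I, ∀ y : ℝ, 0 < x + y →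
      pform s (m + 1) (pd1 L x y) (pd2 L x y) = -2 / (x + y) ^ 2) :
    ∀ x ∈ I,
      pform s (m + 1) (z x) (z x) = 0 ∧
      pform s (m + 1) (deriv z x) (deriv z x) = 4 ∧
      pform s (m + 1) (deriv (deriv z) x) (deriv (deriv z) x) = 0 := by
  intro x hx
  have hx1 : (0:ℝ) < x + (1 - x) := by linarith
  have hx2 : (0:ℝ) < x + (2 - x) := by linarith
  have h1 : x + (1 - x) = 1 := by ring
  have h2 : x + (2 - x) = 2 := by ring
  have hct : ContDiffAt ℝ (⊤ : ℕ∞) z x := hz.contDiffAt (hIo.mem_nhds hx)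
  have hz1 : HasDerivAt z (deriv z x) x := (hct.differentiableAt (by simp)).hasDerivAt
  have hdz : ContDiffOn ℝ (⊤ : ℕ∞) (deriv z) I := hz.deriv_of_isOpen hIo (by simp)
  have hz2 : HasDerivAt (deriv z) (deriv (deriv z) x) x :=
    (((hdz.contDiffAt (hIo.mem_nhds hx))).differentiableAt (by simp)).hasDerivAt
  -- pd2 computation
  have hpd2 : ∀ y : ℝ, 0 < x + y →
      pd2 L x y = (-1 / (x + y) ^ 2) • z x := by
    intro y hy
    have hne' : x + y ≠ 0 := ne_of_gt hy
    have h : HasDerivAt (fun t => (1 / (x + t)) • z x - (1 / 2 : ℝ) • deriv z x)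
        ((-1 / (x + y) ^ 2) • z x) y := by
      have hinv : HasDerivAt (fun t : ℝ => 1 / (x + t)) (-1 / (x + y) ^ 2) y := by
        simp only [one_div]
        have := ((hasDerivAt_id y).const_add x).inv hne'
        simpa [Pi.inv_def] using this
      simpa using (hinv.smul_const (z x)).sub_const ((1 / 2 : ℝ) • deriv z x)
    unfold pd2
    simp only [hLdef]
    exact h.deriv
  -- pd1 computation
  have hpd1 : ∀ y : ℝ, 0 < x + y →
      pd1 L x y = ((1 / (x + y)) • deriv z x + (-1 / (x + y) ^ 2) • z x)
        - (1 / 2 : ℝ) • deriv (deriv z) x := by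
    intro y hy
    have hne' : x + y ≠ 0 := ne_of_gt hy
    have hinv : HasDerivAt (fun t : ℝ => 1 / (t + y)) (-1 / (x + y) ^ 2) x := by
      simp only [one_div]
      have := ((hasDerivAt_id x).add_const y).inv hne'
      simpa [Pi.inv_def] using this
    have h : HasDerivAt (fun t => (1 / (t + y)) • z t - (1 / 2 : ℝ) • deriv z t)
        (((1 / (x + y)) • deriv z x + (-1 / (x + y) ^ 2) • z x)
          - (1 / 2 : ℝ) • deriv (deriv z) x) x :=
      (hinv.smul hz1).sub (hz2.const_smul (1 / 2 : ℝ))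
    unfold pd1
    simp only [hLdef]
    exact h.deriv
  -- abbreviations for the six inner products
  have E1 := hyy x hx (1-x) hx1
  rw [hpd2 _ hx1, h1] at E1
  simp only [pform_smul_left, pform_smul_right] at E1
  have Exy1 := hxy x hx (1-x) hx1
  rw [hpd1 _ hx1, hpd2 _ hx1, h1] at Exy1
  simp only [pform_add_left, pform_sub_left, pform_smul_left, pform_add_right,
    pform_sub_right, pform_smul_right] at Exy1
  have Exy2 := hxy x hx (2-x) hx2
  rw [hpd1 _ hx2, hpd2 _ hx2, h2] at Exy2
  simp only [pform_add_left, pform_sub_left, pform_smul_left, pform_add_right,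
    pform_sub_right, pform_smul_right] at Exy2
  have ELL1 := hLL x hx (1-x) hx1
  rw [hLdef, h1] at ELL1
  simp only [pform_add_left, pform_sub_left, pform_smul_left, pform_add_right,
    pform_sub_right, pform_smul_right] at ELL1
  have Exx1 := hxx x hx (1-x) hx1
  rw [hpd1 _ hx1, h1] at Exx1
  simp only [pform_add_left, pform_sub_left, pform_smul_left, pform_add_right,
    pform_sub_right, pform_smul_right] at Exx1
  have Exx2 := hxx x hx (2-x) hx2
  rw [hpd1 _ hx2, h2] at Exx2
  simp only [pform_add_left, pform_sub_left, pform_smul_left, pform_add_right,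
    pform_sub_right, pform_smul_right] at Exx2
  norm_num at E1 Exy1 Exy2 ELL1 Exx1 Exx2
  have c1 := pform_comm s (m+1) (z x) (deriv z x)
  have c2 := pform_comm s (m+1) (z x) (deriv (deriv z) x)
  have c3 := pform_comm s (m+1) (deriv z x) (deriv (deriv z) x)
  refine ⟨by linarith, by linarith, by linarith⟩
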